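/- arXiv:2309.09960 — 3 statements merged into one kernel-verified Lean document; each statement's English description precedes it below -/
import Mathlib

section
/- For every unit vector m̂ ∈ ℝ³ and each choice of sign ±, ∫_{S²} 1_{±⟨m̂,n⟩>0} Π_n dσ(n) = (1/2)(I ± (1/2) m̂·σ). That is, the covariant POVM {Π_n} simulates every noisy projective qubit measurement at noise parameter r = 1/2 via the response functions Θ(±m̂·n). -/
open MeasureTheory Matrix Kronecker
open scoped RealInnerProductSpace ENNReal ComplexOrder

noncomputable section

/-- 2×2 complex matrices (qubit operators). -/
abbrev Mat2 := Matrix (Fin 2) (Fin 2) ℂ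
/-- 4×4 complex matrices indexed by two qubits. -/
abbrev Mat4 := Matrix (Fin 2 × Fin 2) (Fin 2 × Fin 2) ℂ
/-- ℝ³ with the Euclidean norm. -/
abbrev E3 := EuclideanSpace ℝ (Fin 3)

/-- Pauli matrix σx. -/
def sx : Mat2 := !![0, 1; 1, 0]
/-- Pauli matrix σy. -/
def sy : Mat2 := !![0, -Complex.I; Complex.I, 0]
/-- Pauli matrix σz. -/
def sz : Mat2 := !![1, 0; 0, -1]

/-- Pauli vector `v · σ = v₁ σx + v₂ σy + v₃ σz`. -/
def dotS (v : E3) : Mat2 := (v 0 : ℂ) • sx + (v 1 : ℂ) • sy + (v 2 : ℂ) • sz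

/-- The singlet state vector `|Ψ⁻⟩ = (|01⟩ - |10⟩)/√2`. -/
def psiMinus : Fin 2 × Fin 2 → ℂ := fun p =>
  if p = (0, 1) then (1 : ℂ) / Real.sqrt 2 else if p = (1, 0) then -(1 : ℂ) / Real.sqrt 2 else 0

/-- The projector `|Ψ⁻⟩⟨Ψ⁻|`. -/
def psiProj : Mat4 := Matrix.of fun p q => psiMinus p * star (psiMinus q)

/-- The two-qubit Werner state `ρ_W(r) = r |Ψ⁻⟩⟨Ψ⁻| + (1-r) I/4`. -/
def werner (r : ℝ) : Mat4 := (r : ℂ) • psiProj + (((1 - r : ℝ) : ℂ) / 4) • (1 : Mat4)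

/-- Partial trace over the first qubit: `(Tr_A X)_{jk} = Σ_i X_{(i,j),(i,k)}`. -/
def ptraceA (X : Mat4) : Mat2 := Matrix.of fun j k => ∑ i : Fin 2, X (i, j) (i, k)

/-- The unit sphere S² in ℝ³. -/
abbrev S2 := Metric.sphere (0 : E3) 1

/-- The surface measure on the unit sphere (total mass 4π). -/
def sphereMeasure : Measure S2 := (volume : Measure E3).toSphere

/-- The covariant POVM density `Π_n = (1/(4π))(I + n·σ)`. -/
def Pn (n : E3) : Mat2 := ((4 * Real.pi)⁻¹ : ℝ) • ((1 : Mat2) + dotS n)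

/-!
Polar coordinates turn hemisphere integrals of degree-`k` homogeneous functions into Gaussian
integrals over `ℝ³`: if `F (r • n) = r ^ k * f n`, then
`∫ F x * exp (-‖x‖²) dx = (∫ f dσ) * Γ((k + 3) / 2) / 2`.
A reflection taking `m` to a coordinate vector factors the Gaussian integrals of
`1_{⟪m, x⟫ > 0}` and `1_{⟪m, x⟫ > 0} ⟪m, x⟫` into one-dimensional ones, which gives
`σ(H) = 2π` and `∫_H ⟪m, n⟫ dσ = π` for the hemisphere `H = {n | 0 < ⟪m, n⟫}`; for `w ⊥ m`
the reflection in `w⊥` fixes `m` and negates `⟪w, ·⟫`, so `∫_H ⟪w, n⟫ dσ = 0`. Hence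
`∫_H n dσ = π m`, and integrating `Π_n = (I + n·σ) / (4π)` over `H` gives
`(1/2)(I + (1/2) m·σ)`; the opposite sign is the case `-m`.
-/

open Set Real

theorem integral_volumeIoiPow (n : ℕ) (h : ℝ → ℝ) :
    ∫ r, h r ∂(Measure.volumeIoiPow n) = ∫ r in Ioi (0 : ℝ), r ^ n * h r := by
  rw [Measure.volumeIoiPow, integral_withDensity_eq_integral_toReal_smul₀ (by fun_prop) (by simp),
    integral_subtype_comap measurableSet_Ioi (fun r => (ENNReal.ofReal (r ^ n)).toReal • h r)]
  refine setIntegral_congr_fun measurableSet_Ioi fun r hr => ?_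
  rw [ENNReal.toReal_ofReal (pow_nonneg (le_of_lt hr) n), smul_eq_mul]

theorem integral_eq_integral_toSphere_mul_integral_Ioi {E : Type*} [NormedAddCommGroup E]
    [NormedSpace ℝ E] [FiniteDimensional ℝ E] [Nontrivial E] [MeasurableSpace E] [BorelSpace E]
    (μ : Measure E) [μ.IsAddHaarMeasure] (f : Metric.sphere (0 : E) 1 → ℝ) (h : ℝ → ℝ)
    (G : E → ℝ)
    (hG : ∀ (n : Metric.sphere (0 : E) 1) (r : ℝ), 0 < r → G (r • (n : E)) = f n * h r) :
    ∫ x, G x ∂μ =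
      (∫ n, f n ∂μ.toSphere) * ∫ r in Ioi (0 : ℝ), r ^ (Module.finrank ℝ E - 1) * h r := by
  have hG' : ∀ x : ({0}ᶜ : Set E),
      G x = f (homeomorphUnitSphereProd E x).1 * h (homeomorphUnitSphereProd E x).2 := by
    intro ⟨x, hx⟩
    rw [homeomorphUnitSphereProd_apply_snd_coe, ← hG _ _ (norm_pos_iff.2 hx)]
    simp [smul_inv_smul₀ (norm_ne_zero_iff.2 hx)]
  rw [← integral_volumeIoiPow, ← integral_prod_mul (μ := μ.toSphere),
    ← μ.measurePreserving_homeomorphUnitSphereProd.integral_comp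
      (Homeomorph.measurableEmbedding _),
    ← funext hG', integral_subtype_comap (measurableSet_singleton _).compl G,
    restrict_compl_singleton]

theorem integral_Ioi_pow_mul_exp_neg_sq (k : ℕ) :
    ∫ r in Ioi (0 : ℝ), r ^ k * exp (-r ^ 2) = Gamma ((k + 1) / 2) / 2 := by
  have h := integral_rpow_mul_exp_neg_rpow (p := 2) (q := k) two_pos
    (neg_one_lt_zero.trans_le k.cast_nonneg)
  simp only [rpow_natCast, rpow_two] at h
  rw [h, one_div_mul_eq_div]

theorem integral_boole_mul_eq_setIntegral {α 𝕜 : Type*} [MeasurableSpace α] [RCLike 𝕜]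
    {μ : Measure α} (p : α → Prop) [DecidablePred p] (hp : MeasurableSet {x | p x})
    (F : α → 𝕜) : ∫ x, (if p x then 1 else 0) * F x ∂μ = ∫ x in {x | p x}, F x ∂μ := by
  rw [← integral_indicator hp]
  congr with x
  by_cases hx : p x <;> simp [hx]

theorem integral_boole_pos_mul_exp_neg_sq :
    ∫ t : ℝ, (if 0 < t then 1 else 0) * exp (-t ^ 2) = √π / 2 := by
  rw [integral_boole_mul_eq_setIntegral (0 < ·) measurableSet_Ioi]
  have h := integral_gaussian_Ioi 1
  simp only [neg_mul, one_mul, div_one] at h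
  exact h

theorem integral_boole_pos_mul_self_mul_exp_neg_sq :
    ∫ t : ℝ, (if 0 < t then 1 else 0) * t * exp (-t ^ 2) = 1 / 2 := by
  simp_rw [mul_assoc]
  rw [integral_boole_mul_eq_setIntegral (0 < ·) measurableSet_Ioi]
  have h := integral_Ioi_pow_mul_exp_neg_sq 1
  norm_num [Gamma_one] at h
  exact h

theorem integral_comp_inner_mul_inner_mul_exp_neg_norm_sq_of_inner_eq_zero {E : Type*}
    [NormedAddCommGroup E] [InnerProductSpace ℝ E] [FiniteDimensional ℝ E] [MeasurableSpace E]
    [BorelSpace E] {m w : E} (hmw : ⟪m, w⟫ = 0) (g : ℝ → ℝ) :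
    ∫ x, g ⟪m, x⟫ * ⟪w, x⟫ * exp (-‖x‖ ^ 2) = 0 := by
  set S := Submodule.reflection (ℝ ∙ w)ᗮ
  have hSw : S w = -w := Submodule.reflection_orthogonalComplement_singleton_eq_neg w
  have hSm : S m = m := Submodule.reflection_mem_subspace_eq_self
    (Submodule.mem_orthogonal_singleton_iff_inner_left.2 hmw)
  have hodd (x : E) : g ⟪m, S x⟫ * ⟪w, S x⟫ * exp (-‖S x‖ ^ 2) =
      -(g ⟪m, x⟫ * ⟪w, x⟫ * exp (-‖x‖ ^ 2)) := by
    have hw : ⟪w, S x⟫ = -⟪w, x⟫ := by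
      rw [← neg_eq_iff_eq_neg, ← inner_neg_left, ← hSw, S.inner_map_map]
    rw [hw, S.norm_map, ← S.inner_map_map, hSm, Submodule.reflection_reflection]
    ring
  have h := S.measurePreserving.integral_comp S.toMeasurableEquiv.measurableEmbedding
    (fun x => g ⟪m, x⟫ * ⟪w, x⟫ * exp (-‖x‖ ^ 2))
  simp only [hodd, integral_neg] at h
  linarith

section Gaussian

variable {ι : Type*} [Fintype ι]

theorem integral_euclideanSpace_prod (F : ι → ℝ → ℝ) :
    ∫ x : EuclideanSpace ℝ ι, ∏ i, F i (x i) = ∏ i, ∫ t, F i t := by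
  rw [← integral_fintype_prod_eq_prod, ← volume_pi,
    ← (EuclideanSpace.volume_preserving_symm_measurableEquiv_toLp ι).integral_comp']
  rfl

theorem integral_comp_inner_mul_exp_neg_norm_sq {m : EuclideanSpace ℝ ι} (hm : ‖m‖ = 1)
    (g : ℝ → ℝ) :
    ∫ x, g ⟪m, x⟫ * exp (-‖x‖ ^ 2) = √π ^ (Fintype.card ι - 1) * ∫ t, g t * exp (-t ^ 2) := by
  classical
  obtain ⟨i₀⟩ : Nonempty ι := by
    by_contra h
    rw [not_nonempty_iff] at h
    simp [Subsingleton.elim m 0] at hm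
  set e := EuclideanSpace.single i₀ (1 : ℝ)
  set R := Submodule.reflection (ℝ ∙ (m - e))ᗮ
  have hRm : R m = e := Submodule.reflection_sub (by simp [e, hm])
  have hinner (x) : ⟪m, R x⟫ = x i₀ := by
    rw [← R.inner_map_map, Submodule.reflection_reflection, hRm]
    simp [e, EuclideanSpace.inner_single_left]
  let F i t := if i = i₀ then g t * exp (-t ^ 2) else exp (-t ^ 2)
  have hprod (x : EuclideanSpace ℝ ι) : g (x i₀) * exp (-‖x‖ ^ 2) = ∏ i, F i (x i) := by
    rw [EuclideanSpace.real_norm_sq_eq, ← Finset.sum_neg_distrib, exp_sum,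
      Fintype.prod_eq_mul_prod_compl i₀, Fintype.prod_eq_mul_prod_compl i₀, ← mul_assoc]
    refine congrArg₂ _ (by simp [F]) (Finset.prod_congr rfl fun i hi => ?_)
    simp [F, show i ≠ i₀ by simpa using hi]
  have hF : ∏ i, ∫ t, F i t = (∫ t, g t * exp (-t ^ 2)) * √π ^ (Fintype.card ι - 1) := by
    have hgauss : ∫ t : ℝ, exp (-t ^ 2) = √π := by simpa using integral_gaussian 1
    rw [Fintype.prod_eq_mul_prod_compl i₀, Finset.prod_congr rfl (g := fun _ => √π)
      fun i hi => by simp [F, show i ≠ i₀ by simpa using hi, hgauss],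
      Finset.prod_const, Finset.card_compl, Finset.card_singleton]
    simp [F]
  rw [← R.measurePreserving.integral_comp R.toMeasurableEquiv.measurableEmbedding]
  simp only [hinner, R.norm_map, hprod, integral_euclideanSpace_prod, hF, mul_comm]

end Gaussian

instance : IsFiniteMeasure sphereMeasure := by
  unfold sphereMeasure
  infer_instance

theorem Continuous.integrable_sphereMeasure {F : Type*} [NormedAddCommGroup F] {f : S2 → F}
    (hf : Continuous f) : Integrable f sphereMeasure :=
  hf.integrable_of_hasCompactSupport (HasCompactSupport.of_compactSpace f)

theorem integral_mul_exp_neg_norm_sq_of_homogeneous (f : S2 → ℝ) (F : E3 → ℝ) (k : ℕ)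
    (hF : ∀ (n : S2) (r : ℝ), 0 < r → F (r • (n : E3)) = r ^ k * f n) :
    ∫ x, F x * exp (-‖x‖ ^ 2) = (∫ n, f n ∂sphereMeasure) * (Gamma ((k + 3) / 2) / 2) := by
  rw [integral_eq_integral_toSphere_mul_integral_Ioi volume f (fun r => r ^ k * exp (-r ^ 2)),
    finrank_euclideanSpace_fin]
  · simp_rw [← mul_assoc, ← pow_add]
    rw [integral_Ioi_pow_mul_exp_neg_sq, sphereMeasure]
    congr 4
    push_cast
    ring
  · intro n r hr
    rw [hF n r hr, norm_smul, norm_of_nonneg hr.le, mem_sphere_zero_iff_norm.1 n.2, mul_one]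
    ring

theorem measurableSet_hemisphere (m : E3) : MeasurableSet {n : S2 | 0 < ⟪m, (n : E3)⟫} :=
  (isOpen_lt continuous_const (by fun_prop)).measurableSet

theorem integral_boole_mul_inner_mul_exp_neg_norm_sq (m v : E3) :
    ∫ x, (if 0 < ⟪m, x⟫ then 1 else 0) * ⟪v, x⟫ * exp (-‖x‖ ^ 2) =
      (∫ n in {n : S2 | 0 < ⟪m, (n : E3)⟫}, ⟪v, (n : E3)⟫ ∂sphereMeasure) / 2 := by
  rw [integral_mul_exp_neg_norm_sq_of_homogeneous
    (fun n : S2 => (if 0 < ⟪m, (n : E3)⟫ then 1 else 0) * ⟪v, (n : E3)⟫)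
    (fun x => (if 0 < ⟪m, x⟫ then 1 else 0) * ⟪v, x⟫) 1
    (fun n r hr => by simp [inner_smul_right, mul_pos_iff_of_pos_left hr]),
    integral_boole_mul_eq_setIntegral (fun n : S2 => 0 < ⟪m, (n : E3)⟫)
      (measurableSet_hemisphere m)]
  norm_num
  ring

@[simps]
def dotSLinearMap : E3 →ₗ[ℝ] Mat2 where
  toFun := dotS
  map_add' v w := by
    simp only [dotS, PiLp.add_apply, Complex.ofReal_add, add_smul]
    abel
  map_smul' c v := by
    simp only [dotS, PiLp.smul_apply, smul_eq_mul, Complex.ofReal_mul, mul_smul, smul_add,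
      RingHom.id_apply, Complex.coe_smul]

theorem dotS_neg (v : E3) : dotS (-v) = -dotS v :=
  dotSLinearMap.map_neg v

section Hemisphere

variable {m : E3}

theorem sphereMeasure_real_hemisphere (hm : ‖m‖ = 1) :
    sphereMeasure.real {n : S2 | 0 < ⟪m, (n : E3)⟫} = 2 * π := by
  have h := integral_mul_exp_neg_norm_sq_of_homogeneous
    (fun n : S2 => if 0 < ⟪m, (n : E3)⟫ then 1 else 0) (fun x => if 0 < ⟪m, x⟫ then 1 else 0) 0
    (fun n r hr => by simp [inner_smul_right, mul_pos_iff_of_pos_left hr])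
  have hΓ : Gamma (3 / 2) = √π / 2 := by
    rw [show (3 / 2 : ℝ) = 1 / 2 + 1 by norm_num, Gamma_add_one (by norm_num), Gamma_one_half_eq]
    ring
  have hσ := integral_boole_mul_eq_setIntegral (μ := sphereMeasure)
    (fun n : S2 => 0 < ⟪m, (n : E3)⟫) (measurableSet_hemisphere m) (1 : S2 → ℝ)
  simp only [Pi.one_apply, mul_one, setIntegral_const, smul_eq_mul] at hσ
  rw [integral_comp_inner_mul_exp_neg_norm_sq hm (fun t => if 0 < t then 1 else 0),
    integral_boole_pos_mul_exp_neg_sq] at h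
  norm_num [hΓ, hσ, sq_sqrt pi_pos.le] at h
  field_simp [(sqrt_pos.2 pi_pos).ne'] at h
  linarith

theorem setIntegral_hemisphere_inner (hm : ‖m‖ = 1) (v : E3) :
    ∫ n in {n : S2 | 0 < ⟪m, (n : E3)⟫}, ⟪v, (n : E3)⟫ ∂sphereMeasure = π * ⟪v, m⟫ := by
  set w := v - ⟪v, m⟫ • m
  have hmw : ⟪m, w⟫ = 0 := by
    simp [w, inner_sub_right, real_inner_smul_right, hm, real_inner_comm]
  have hv : (fun n : S2 => ⟪v, (n : E3)⟫) =
      fun n : S2 => ⟪v, m⟫ * ⟪m, (n : E3)⟫ + ⟪w, (n : E3)⟫ := by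
    ext n
    simp [w, inner_sub_left, real_inner_smul_left]
  have hself : ∫ n in {n : S2 | 0 < ⟪m, (n : E3)⟫}, ⟪m, (n : E3)⟫ ∂sphereMeasure = π := by
    have h := integral_boole_mul_inner_mul_exp_neg_norm_sq m m
    rw [integral_comp_inner_mul_exp_neg_norm_sq hm (fun t => (if 0 < t then 1 else 0) * t),
      integral_boole_pos_mul_self_mul_exp_neg_sq] at h
    norm_num [sq_sqrt pi_pos.le] at h
    linarith
  have hperp : ∫ n in {n : S2 | 0 < ⟪m, (n : E3)⟫}, ⟪w, (n : E3)⟫ ∂sphereMeasure = 0 := by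
    have h := integral_boole_mul_inner_mul_exp_neg_norm_sq m w
    rw [integral_comp_inner_mul_inner_mul_exp_neg_norm_sq_of_inner_eq_zero hmw
      (fun t => if 0 < t then 1 else 0)] at h
    linarith
  have hint (u : E3) : Integrable (fun n : S2 => ⟪u, (n : E3)⟫) sphereMeasure :=
    Continuous.integrable_sphereMeasure (by fun_prop)
  rw [hv, integral_add ((hint m).integrableOn.const_mul _) (hint w).integrableOn,
    integral_const_mul, hself, hperp]
  ring

theorem setIntegral_hemisphere_coe (hm : ‖m‖ = 1) :
    ∫ n in {n : S2 | 0 < ⟪m, (n : E3)⟫}, (n : E3) ∂sphereMeasure = π • m := by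
  refine ext_inner_left ℝ fun v => ?_
  rw [← integral_inner continuous_subtype_val.integrable_sphereMeasure.integrableOn,
    setIntegral_hemisphere_inner hm, real_inner_smul_right]

theorem setIntegral_hemisphere_Pn (hm : ‖m‖ = 1) (i j : Fin 2) :
    ∫ n in {n : S2 | 0 < ⟪m, (n : E3)⟫}, Pn n i j ∂sphereMeasure =
      ((1 / 2 : ℂ) • ((1 : Mat2) + (1 / 2 : ℂ) • dotS m)) i j := by
  let L := (Matrix.entryLinearMap ℝ ℂ i j ∘ₗ dotSLinearMap).toContinuousLinearMap
  have hcoe : IntegrableOn (fun n : S2 => (n : E3)) {n : S2 | 0 < ⟪m, (n : E3)⟫} sphereMeasure :=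
    continuous_subtype_val.integrable_sphereMeasure.integrableOn
  calc ∫ n in {n : S2 | 0 < ⟪m, (n : E3)⟫}, Pn n i j ∂sphereMeasure
      = ∫ n in {n : S2 | 0 < ⟪m, (n : E3)⟫}, (4 * π)⁻¹ • ((1 : Mat2) i j + L n) ∂sphereMeasure :=
        rfl
    _ = (4 * π)⁻¹ • ((sphereMeasure.real {n : S2 | 0 < ⟪m, (n : E3)⟫}) • (1 : Mat2) i j +
          L (∫ n in {n : S2 | 0 < ⟪m, (n : E3)⟫}, (n : E3) ∂sphereMeasure)) := by
        rw [integral_smul, integral_add (integrable_const _) (L.integrable_comp hcoe),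
          setIntegral_const, L.integral_comp_comm hcoe]
    _ = _ := by
        rw [sphereMeasure_real_hemisphere hm, setIntegral_hemisphere_coe hm, map_smul]
        simp only [L, LinearMap.coe_toContinuousLinearMap', LinearMap.coe_comp,
          Function.comp_apply, Matrix.entryLinearMap_apply, dotSLinearMap_apply,
          Matrix.smul_apply, Matrix.add_apply, Complex.real_smul, smul_eq_mul]
        push_cast
        field_simp
        ring

end Hemisphere

/-- the covariant POVM simulates every noisy projective measurement at r = 1/2. -/
theorem pvm_simulation (m : E3) (hm : ‖m‖ = 1) :
    (∀ i j : Fin 2,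
      (∫ n : S2, (if 0 < ⟪m, (n : E3)⟫ then (1 : ℂ) else 0) * Pn (n : E3) i j ∂sphereMeasure) =
        ((1/2 : ℂ) • ((1 : Mat2) + (1/2 : ℂ) • dotS m)) i j) ∧
    (∀ i j : Fin 2,
      (∫ n : S2, (if 0 < -⟪m, (n : E3)⟫ then (1 : ℂ) else 0) * Pn (n : E3) i j ∂sphereMeasure) =
        ((1/2 : ℂ) • ((1 : Mat2) - (1/2 : ℂ) • dotS m)) i j) := by
  refine ⟨fun i j => ?_, fun i j => ?_⟩
  · rw [integral_boole_mul_eq_setIntegral (fun n : S2 => 0 < ⟪m, (n : E3)⟫)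
      (measurableSet_hemisphere m), setIntegral_hemisphere_Pn hm]
  · simp_rw [← inner_neg_left]
    rw [integral_boole_mul_eq_setIntegral (fun n : S2 => 0 < ⟪-m, (n : E3)⟫)
      (measurableSet_hemisphere (-m)), setIntegral_hemisphere_Pn (by rwa [norm_neg]), dotS_neg,
      smul_neg, sub_eq_add_neg]
end
end

section
/- (Lemma 1, LHS-to-compatibility direction, finite version.) Let Λ be a finite set, let ρ_λ (λ ∈ Λ) be 2×2 density matrices (positive semidefinite, trace 1), and let p(λ) ≥ 0 with Σ_λ p(λ) = 1 and Σ_λ p(λ) ρ_λ = I/2. Let r ∈ [0,1], let {M_a}_{a∈F} be a qubit POVM, and suppose there are numbers p(a|λ) ∈ [0,1] with Σ_{a∈F} p(a|λ) = 1 for each λ, such that Tr_A[(M_a ⊗ I) ρ_W(r)] = Σ_{λ∈Λ} p(λ) p(a|λ) ρ_λ for all a ∈ F. Then the matrices Π_λ := 2 p(λ) σy·ρ_λᵀ·σy form a qubit POVM (positive semidefinite summing to I), and r·M_a + (1−r)(Tr M_a / 2)·I = Σ_{λ∈Λ} p(a|λ) Π_λ for all a ∈ F. -/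
open MeasureTheory Matrix Kronecker
open scoped RealInnerProductSpace ENNReal ComplexOrder

noncomputable section

/-!
Measuring `M` on half of the singlet steers the other half to `σy Mᵀ σy / 2`, and the maximally
mixed part of the Werner state contributes `Tr M / 4 · I`. Applying the involution
`A ↦ σy Aᵀ σy` to the local-hidden-state model of the steered assemblage therefore turns it into
a decomposition of the noisy measurement `r M + (1 - r) Tr M / 2 · I` along the POVM `Π_λ`,
whose elements are positive and sum to `I` because the flip preserves positivity and fixes `I`.
-/

def spinFlip : Mat2 →ₗ[ℂ] Mat2 where
  toFun A := sy * Aᵀ * sy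
  map_add' A B := by rw [transpose_add, Matrix.mul_add, Matrix.add_mul]
  map_smul' c A := by rw [transpose_smul, Matrix.mul_smul, Matrix.smul_mul]; rfl

lemma spinFlip_apply (A : Mat2) : spinFlip A = sy * Aᵀ * sy := rfl

lemma sy_conjTranspose : syᴴ = sy := by
  ext i j; fin_cases i <;> fin_cases j <;> simp [sy]

lemma sy_transpose : syᵀ = -sy := by
  ext i j; fin_cases i <;> fin_cases j <;> simp [sy]

lemma sy_mul_sy : sy * sy = 1 := by
  ext i j; fin_cases i <;> fin_cases j <;> simp [sy, Matrix.mul_apply]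

lemma spinFlip_one : spinFlip 1 = 1 := by
  rw [spinFlip_apply, transpose_one, Matrix.mul_one, sy_mul_sy]

lemma spinFlip_spinFlip (A : Mat2) : spinFlip (spinFlip A) = A := by
  simp only [spinFlip_apply, transpose_mul, transpose_transpose, sy_transpose,
    Matrix.mul_neg, Matrix.neg_mul, neg_neg, ← Matrix.mul_assoc, sy_mul_sy, Matrix.one_mul]
  rw [Matrix.mul_assoc, sy_mul_sy, Matrix.mul_one]

lemma Matrix.PosSemidef.spinFlip {A : Mat2} (hA : A.PosSemidef) : (spinFlip A).PosSemidef := by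
  simpa [spinFlip_apply, sy_conjTranspose] using hA.transpose.mul_mul_conjTranspose_same sy

lemma ptraceA_add (X Y : Mat4) : ptraceA (X + Y) = ptraceA X + ptraceA Y := by
  ext j k; simp [ptraceA, Finset.sum_add_distrib]

lemma ptraceA_smul (c : ℂ) (X : Mat4) : ptraceA (c • X) = c • ptraceA X := by
  ext j k; simp [ptraceA, mul_add]

lemma ptraceA_kronecker_one (M : Mat2) : ptraceA (M ⊗ₖ (1 : Mat2)) = M.trace • 1 := by
  ext j k; fin_cases j <;> fin_cases k <;> simp [ptraceA, Matrix.trace, Fin.sum_univ_two]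

lemma ptraceA_kronecker_one_mul_psiProj (M : Mat2) :
    ptraceA ((M ⊗ₖ (1 : Mat2)) * psiProj) = (1 / 2 : ℂ) • spinFlip M := by
  have hsqrt : ((Real.sqrt 2 : ℝ) : ℂ) * ((Real.sqrt 2 : ℝ) : ℂ) = 2 := by
    rw [← Complex.ofReal_mul, Real.mul_self_sqrt (by norm_num)]; norm_num
  ext j k; fin_cases j <;> fin_cases k <;>
    simp [ptraceA, Matrix.mul_apply, Fintype.sum_prod_type, psiProj, psiMinus, spinFlip_apply, sy,
      Fin.sum_univ_two, Matrix.one_apply, vecMul, dotProduct] <;>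
    field_simp <;> ring_nf <;> simp only [pow_two, Complex.I_mul_I, hsqrt] <;> ring

lemma ptraceA_kronecker_one_mul_werner (r : ℝ) (M : Mat2) :
    ptraceA ((M ⊗ₖ (1 : Mat2)) * werner r) =
      ((r : ℂ) / 2) • spinFlip M + (((1 - r : ℝ) : ℂ) / 4 * M.trace) • 1 := by
  rw [werner, Matrix.mul_add, Matrix.mul_smul, Matrix.mul_smul, Matrix.mul_one, ptraceA_add,
    ptraceA_smul, ptraceA_smul, ptraceA_kronecker_one_mul_psiProj, ptraceA_kronecker_one,
    smul_smul, smul_smul]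
  ring_nf

theorem LHS_to_compatibility_general {Λ F : Type} [Fintype Λ] [Fintype F]
    (ρ : Λ → Mat2) (hρpsd : ∀ l, (ρ l).PosSemidef)
    (pl : Λ → ℝ) (hpl : ∀ l, 0 ≤ pl l)
    (havg : ∑ l, (pl l : ℂ) • ρ l = (1/2 : ℂ) • (1 : Mat2))
    (r : ℝ)
    (M : F → Mat2)
    (p : F → Λ → ℝ)
    (hsim : ∀ a, ptraceA ((M a ⊗ₖ (1 : Mat2)) * werner r) =
      ∑ l, ((pl l * p a l : ℝ) : ℂ) • ρ l) :
    (∀ l, ((2 * pl l : ℝ) • (sy * (ρ l)ᵀ * sy)).PosSemidef) ∧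
    (∑ l, (2 * pl l : ℝ) • (sy * (ρ l)ᵀ * sy)) = 1 ∧
    (∀ a, (r : ℂ) • M a + (((1 - r : ℝ) : ℂ) * ((M a).trace / 2)) • (1 : Mat2) =
      ∑ l, (p a l : ℂ) • ((2 * pl l : ℝ) • (sy * (ρ l)ᵀ * sy))) := by
  simp only [← spinFlip_apply]
  refine ⟨fun l => (hρpsd l).spinFlip.smul (by linarith [hpl l]), ?_, fun a => ?_⟩
  · calc ∑ l, (2 * pl l : ℝ) • spinFlip (ρ l) = spinFlip ((2 : ℂ) • ∑ l, (pl l : ℂ) • ρ l) := by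
          simp [map_sum, Finset.smul_sum, smul_smul, ← Complex.coe_smul]
      _ = 1 := by rw [havg, smul_smul]; norm_num [spinFlip_one]
  · calc (r : ℂ) • M a + (((1 - r : ℝ) : ℂ) * ((M a).trace / 2)) • (1 : Mat2)
        = spinFlip ((2 : ℂ) • ptraceA ((M a ⊗ₖ (1 : Mat2)) * werner r)) := by
          rw [ptraceA_kronecker_one_mul_werner, smul_add, map_add, smul_smul, smul_smul, map_smul,
            map_smul, spinFlip_spinFlip, spinFlip_one]
          congr 1 <;> congr 1 <;> ring
      _ = _ := by
          rw [hsim, map_smul, map_sum, Finset.smul_sum]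
          refine Finset.sum_congr rfl fun l _ => ?_
          rw [map_smul, ← Complex.coe_smul, smul_smul, smul_smul]
          congr 1; push_cast; ring

/-- Lemma 1, LHS ⟹ compatibility, finite version. -/
theorem LHS_to_compatibility {Λ F : Type} [Fintype Λ] [Fintype F]
    (ρ : Λ → Mat2) (hρpsd : ∀ l, (ρ l).PosSemidef) (hρtr : ∀ l, (ρ l).trace = 1)
    (pl : Λ → ℝ) (hpl : ∀ l, 0 ≤ pl l) (hplsum : ∑ l, pl l = 1)
    (havg : ∑ l, (pl l : ℂ) • ρ l = (1/2 : ℂ) • (1 : Mat2))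
    (r : ℝ) (hr : r ∈ Set.Icc (0 : ℝ) 1)
    (M : F → Mat2) (hMpsd : ∀ a, (M a).PosSemidef) (hMsum : ∑ a, M a = 1)
    (p : F → Λ → ℝ) (hp : ∀ a l, p a l ∈ Set.Icc (0 : ℝ) 1) (hpn : ∀ l, ∑ a, p a l = 1)
    (hsim : ∀ a, ptraceA ((M a ⊗ₖ (1 : Mat2)) * werner r) =
      ∑ l, ((pl l * p a l : ℝ) : ℂ) • ρ l) :
    (∀ l, ((2 * pl l : ℝ) • (sy * (ρ l)ᵀ * sy)).PosSemidef) ∧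
    (∑ l, (2 * pl l : ℝ) • (sy * (ρ l)ᵀ * sy)) = 1 ∧
    (∀ a, (r : ℂ) • M a + (((1 - r : ℝ) : ℂ) * ((M a).trace / 2)) • (1 : Mat2) =
      ∑ l, (p a l : ℂ) • ((2 * pl l : ℝ) • (sy * (ρ l)ᵀ * sy))) :=
  LHS_to_compatibility_general ρ hρpsd pl hpl havg r M p hsim
end
end

section
/- (Trigonometric inequality underlying the positivity of the modified response function.) Let θ₁, θ₂, θ₃ ∈ (0, π) and q₁, q₂, q₃ ≥ 0 satisfy q₃ sin(θ₃/2) = q₁ sin(θ₁/2) cos((θ₁+θ₃)/2) + q₂ sin(θ₂/2) cos((θ₂+θ₃)/2). Then θ₁ q₁ + θ₂ q₂ ≥ θ₃ q₃. -/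
open MeasureTheory Matrix Kronecker
open scoped RealInnerProductSpace ENNReal ComplexOrder

noncomputable section

/-- Key "sinc decreasing" inequality: for `0 < s ≤ x` with `s ≤ π`, `x ≤ 2π`,
we have `s * sin x ≤ x * sin s`. -/
lemma sinc_key (s x : ℝ) (hs : 0 < s) (hsx : s ≤ x) (hspi : s ≤ Real.pi)
    (hx2pi : x ≤ 2 * Real.pi) : s * Real.sin x ≤ x * Real.sin s := by
  have hx : 0 < x := lt_of_lt_of_le hs hsx
  have hsins : 0 ≤ Real.sin s := Real.sin_nonneg_of_nonneg_of_le_pi hs.le hspi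
  rcases le_or_gt x Real.pi with hxpi | hxpi
  · -- concavity of sin on [0, π]
    have hcon := strictConcaveOn_sin_Icc.concaveOn
    have h0 : (0 : ℝ) ∈ Set.Icc 0 Real.pi := by
      constructor <;> [rfl; exact Real.pi_pos.le]
    have hxm : x ∈ Set.Icc 0 Real.pi := ⟨hx.le, hxpi⟩
    have ha : (0:ℝ) ≤ 1 - s / x := by
      have : s / x ≤ 1 := (div_le_one hx).mpr hsx
      linarith
    have hb : (0:ℝ) ≤ s / x := by positivity
    have hab : (1 - s / x) + s / x = 1 := by ring
    have := hcon.2 h0 hxm ha hb hab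
    simp only [smul_eq_mul, mul_zero, Real.sin_zero, zero_add] at this
    have hsx' : s / x * x = s := div_mul_cancel₀ s hx.ne'
    rw [hsx'] at this
    -- this : (1 - s/x) * 0 + s/x * sin x ≤ sin s
    have h2 : s / x * Real.sin x ≤ Real.sin s := by linarith
    have := mul_le_mul_of_nonneg_left h2 hx.le
    calc s * Real.sin x = x * (s / x * Real.sin x) := by field_simp
    _ ≤ x * Real.sin s := this
  · -- x ∈ (π, 2π] : sin x ≤ 0
    have hsinx : Real.sin x ≤ 0 := by
      have : Real.sin x = -Real.sin (x - Real.pi) := by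
        rw [← Real.sin_add_pi (x - Real.pi)]; ring_nf
      rw [this, neg_nonpos]
      exact Real.sin_nonneg_of_nonneg_of_le_pi (by linarith) (by linarith)
    calc s * Real.sin x ≤ 0 := mul_nonpos_of_nonneg_of_nonpos hs.le hsinx
    _ ≤ x * Real.sin s := by positivity

/-- Per-term bound: for `θ, θ₃ ∈ (0,π)`,
`sin(θ/2) * cos((θ+θ₃)/2) ≤ (θ/θ₃) * sin(θ₃/2)`. -/
lemma term_bound (θ θ3 : ℝ) (h : θ ∈ Set.Ioo 0 Real.pi) (h3 : θ3 ∈ Set.Ioo 0 Real.pi) :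
    Real.sin (θ/2) * Real.cos ((θ + θ3)/2) ≤ (θ/θ3) * Real.sin (θ3/2) := by
  obtain ⟨hθ, hθπ⟩ := h
  obtain ⟨hθ3, hθ3π⟩ := h3
  set s := θ3 / 2 with hsdef
  have hs : 0 < s := by positivity
  have hprod : Real.sin (θ/2) * Real.cos ((θ + θ3)/2) =
      (Real.sin (θ + s) - Real.sin s) / 2 := by
    have e1 : θ + s = θ/2 + (θ + θ3)/2 := by rw [hsdef]; ring
    have e2 : s = (θ + θ3)/2 - θ/2 := by rw [hsdef]; ring
    rw [e1, e2, Real.sin_add, Real.sin_sub]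
    ring
  have hkey := sinc_key s (θ + s) hs (by linarith) (by linarith [Real.pi_pos])
    (by linarith)
  -- s * sin(θ+s) ≤ (θ+s) * sin s
  have h2 : Real.sin (θ + s) - Real.sin s ≤ (θ / s) * Real.sin s := by
    have := hkey
    have hss : s ≠ 0 := hs.ne'
    rw [div_mul_eq_mul_div, le_div_iff₀ hs]
    nlinarith
  rw [hprod]
  have : θ / θ3 * Real.sin (θ3/2) = (θ / s) * Real.sin s / 2 := by
    rw [hsdef]; field_simp
  rw [this]
  linarith

/-- the trigonometric inequality behind positivity of X and Y. -/
theorem trig_positivity (θ1 θ2 θ3 q1 q2 q3 : ℝ)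
    (h1 : θ1 ∈ Set.Ioo 0 Real.pi) (h2 : θ2 ∈ Set.Ioo 0 Real.pi) (h3 : θ3 ∈ Set.Ioo 0 Real.pi)
    (hq1 : 0 ≤ q1) (hq2 : 0 ≤ q2) (hq3 : 0 ≤ q3)
    (hrel : q3 * Real.sin (θ3/2) =
      q1 * Real.sin (θ1/2) * Real.cos ((θ1 + θ3)/2) +
      q2 * Real.sin (θ2/2) * Real.cos ((θ2 + θ3)/2)) :
    θ3 * q3 ≤ θ1 * q1 + θ2 * q2 := by
  have hθ3 := h3.1
  have hsin3 : 0 < Real.sin (θ3/2) :=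
    Real.sin_pos_of_pos_of_lt_pi (by linarith) (by linarith [Real.pi_pos, h3.2])
  have b1 := term_bound θ1 θ3 h1 h3
  have b2 := term_bound θ2 θ3 h2 h3
  have c1 : q1 * Real.sin (θ1/2) * Real.cos ((θ1 + θ3)/2) ≤
      q1 * ((θ1/θ3) * Real.sin (θ3/2)) := by
    rw [mul_assoc]
    exact mul_le_mul_of_nonneg_left b1 hq1
  have c2 : q2 * Real.sin (θ2/2) * Real.cos ((θ2 + θ3)/2) ≤
      q2 * ((θ2/θ3) * Real.sin (θ3/2)) := by
    rw [mul_assoc]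
    exact mul_le_mul_of_nonneg_left b2 hq2
  have key : q3 * Real.sin (θ3/2) ≤ ((θ1 * q1 + θ2 * q2)/θ3) * Real.sin (θ3/2) := by
    rw [hrel]
    have : q1 * ((θ1/θ3) * Real.sin (θ3/2)) + q2 * ((θ2/θ3) * Real.sin (θ3/2)) =
        ((θ1 * q1 + θ2 * q2)/θ3) * Real.sin (θ3/2) := by field_simp
    linarith
  have h4 : q3 ≤ (θ1 * q1 + θ2 * q2)/θ3 := le_of_mul_le_mul_right
    (by linarith) hsin3
  calc θ3 * q3 ≤ θ3 * ((θ1 * q1 + θ2 * q2)/θ3) :=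
        mul_le_mul_of_nonneg_left h4 hθ3.le
  _ = θ1 * q1 + θ2 * q2 := by field_simp
end
end
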